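/- arXiv:1212.0915 — 2 statements merged into one kernel-verified Lean document; each statement's English description precedes it below -/
import Mathlib

section
/- Let p ≥ 11 be prime with p ≡ 2 (mod 3), and let H be the group of permutations of S_p = {1,...,p-2} generated by F (s ↦ -1-s mod p) and G (s ↦ s^{-1} mod p). Then the action of H on S_p has exactly (p+1)/6 orbits: the orbit {1, (p-1)/2, p-2} of size 3 and (p-5)/6 orbits of size 6. -/
/-!
The maps `F` and `G` are involutions satisfying the braid relation `FGF = GFG`, so they generate
the group `{1, F, G, FG, GF, FGF}`; it has order 6 since `F` has order 2 and `FG` order 3 (with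
`λ = -s` this is the action of `S₃` on cross-ratios). The orbit of `s` therefore has 6 elements
unless a non-trivial element fixes `s`. The fixed points of `F`, `G` and `FGF` are `-1/2`, `1` and
`-2`, which form a single orbit, while `FG` and `GF` fix `s` only if `s² + s + 1 = 0`, impossible
for `p ≡ 2 (mod 3)` because `3 ∤ p - 1`. Counting gives `p - 2 = 3 + 6 (N - 1)` for the number `N`
of orbits.
-/

open MulAction Subgroup Equiv

section Braid
variable {G : Type*} [Group G] {f g : G}

theorem coe_closure_pair_of_braid (hf : f * f = 1) (hg : g * g = 1)
    (hfg : f * g * f = g * f * g) :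
    (closure {f, g} : Set G) = {1, f, g, f * g, g * f, f * g * f} := by
  have hf' : ∀ x, f * (f * x) = x := fun x => by rw [← mul_assoc, hf, one_mul]
  have hg' : ∀ x, g * (g * x) = x := fun x => by rw [← mul_assoc, hg, one_mul]
  have hgfg : g * (f * g) = f * (g * f) := by simp only [← mul_assoc, hfg]
  have hgfgf : g * (f * (g * f)) = f * g := by rw [← hgfg, hg']
  have hf_inv : f⁻¹ = f := inv_eq_of_mul_eq_one_right hf
  have hg_inv : g⁻¹ = g := inv_eq_of_mul_eq_one_right hg
  refine subset_antisymm (fun x hx => ?_) ?_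
  · induction hx using closure_induction_left with
    | one => simp
    | mul_left a ha y _ hy =>
      rcases ha with rfl | rfl <;>
        rcases hy with rfl | rfl | rfl | rfl | rfl | rfl <;>
        simp [mul_assoc, hf, hg, hf', hg', hgfg, hgfgf]
    | inv_mul_cancel a ha y _ hy =>
      rcases ha with rfl | rfl <;>
        rcases hy with rfl | rfl | rfl | rfl | rfl | rfl <;>
        simp [mul_assoc, hf, hg, hf', hg', hgfg, hgfgf, hf_inv, hg_inv]
  · have hfH : f ∈ closure {f, g} := subset_closure (by simp)
    have hgH : g ∈ closure {f, g} := subset_closure (by simp)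
    simp [Set.insert_subset_iff, one_mem, hfH, hgH, mul_mem]

theorem card_closure_pair_of_braid (hf : f * f = 1) (hg : g * g = 1)
    (hfg : f * g * f = g * f * g) (hf1 : f ≠ 1) (hfg1 : f * g ≠ 1) :
    Nat.card (closure {f, g}) = 6 := by
  classical
  have hcoe : (closure {f, g} : Set G) = ({1, f, g, f * g, g * f, f * g * f} : Finset G) := by
    rw [coe_closure_pair_of_braid hf hg hfg]; simp
  have hle : Nat.card (closure {f, g}) ≤ 6 := by
    rw [← SetLike.coe_sort_coe, Nat.card_coe_set_eq, hcoe, Set.ncard_coe_finset]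
    exact Finset.card_le_six
  have : Finite (closure {f, g}) := by
    rw [← SetLike.coe_sort_coe, hcoe]; infer_instance
  have hpos : 0 < Nat.card (closure {f, g}) := Nat.card_pos
  have h2 : orderOf f = 2 := orderOf_eq_prime (by rw [sq, hf]) hf1
  have h3 : orderOf (f * g) = 3 := by
    refine orderOf_eq_prime ?_ hfg1
    calc (f * g) ^ 3 = f * (g * f * g) * f * g := by rw [pow_three]; group
      _ = f * f * g * (f * f) * g := by rw [← hfg]; group
      _ = 1 := by rw [hf, one_mul, mul_one, hg]
  have hfH : f ∈ closure {f, g} := subset_closure (by simp)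
  have hgH : g ∈ closure {f, g} := subset_closure (by simp)
  have d2 := h2 ▸ (closure {f, g}).orderOf_dvd_natCard hfH
  have d3 := h3 ▸ (closure {f, g}).orderOf_dvd_natCard (mul_mem hfH hgH)
  omega

variable {α : Type*} [MulAction G α]

theorem orbit_closure_pair_of_braid (hf : f * f = 1) (hg : g * g = 1)
    (hfg : f * g * f = g * f * g) (x : α) :
    orbit (closure {f, g}) x =
      {x, f • x, g • x, (f * g) • x, (g * f) • x, (f * g * f) • x} := by
  ext y
  simp only [mem_orbit_iff, Subtype.exists, Subgroup.mk_smul, exists_prop, ← SetLike.mem_coe,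
    coe_closure_pair_of_braid hf hg hfg]
  simp [eq_comm]

theorem card_orbit_closure_pair_of_braid (hf : f * f = 1) (hg : g * g = 1)
    (hfg : f * g * f = g * f * g) {x : α} (h₁ : f • x ≠ x) (h₂ : g • x ≠ x)
    (h₃ : (f * g) • x ≠ x) (h₄ : (f * g * f) • x ≠ x) :
    Nat.card (orbit (closure {f, g}) x) = Nat.card (closure {f, g}) := by
  have hstab : stabilizer (closure {f, g}) x = ⊥ := by
    refine (eq_bot_iff_forall _).2 fun ⟨σ, hσ⟩ hσx => Subtype.ext ?_
    rw [← SetLike.mem_coe, coe_closure_pair_of_braid hf hg hfg] at hσ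
    rw [mem_stabilizer_iff, Subgroup.mk_smul] at hσx
    rcases hσ with rfl | rfl | rfl | rfl | rfl | rfl
    · rfl
    · exact absurd hσx h₁
    · exact absurd hσx h₂
    · exact absurd hσx h₃
    · refine absurd ?_ h₃
      conv_lhs => rw [← hσx, smul_smul]
      rw [mul_assoc, ← mul_assoc g, hg, one_mul, hf, one_smul]
    · exact absurd hσx h₄
  rw [Nat.card_coe_set_eq, ← index_stabilizer, hstab, index_bot]

end Braid

section OrbitCount
variable {G X : Type*} [Group G] [MulAction G X] [Finite X] {o₀ : orbitRel.Quotient G X}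
  {a b : ℕ}

theorem card_eq_add_mul_card_orbitRel_quotient_sub_one (h₀ : Nat.card o₀.orbit = a)
    (h : ∀ o ≠ o₀, Nat.card o.orbit = b) :
    Nat.card X = a + b * (Nat.card (orbitRel.Quotient G X) - 1) := by
  classical
  have := Fintype.ofFinite (orbitRel.Quotient G X)
  rw [Nat.card_congr (selfEquivSigmaOrbits' G X), Nat.card_sigma,
    ← Finset.add_sum_erase _ _ (Finset.mem_univ o₀), h₀,
    Finset.sum_congr rfl fun o ho => h o (Finset.ne_of_mem_erase ho), Finset.sum_const,
    Finset.card_erase_of_mem (Finset.mem_univ o₀), Finset.card_univ, Nat.card_eq_fintype_card,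
    smul_eq_mul, mul_comm]

theorem card_subtype_card_orbit_eq_card_orbitRel_quotient_sub_one (h₀ : Nat.card o₀.orbit = a)
    (hab : a ≠ b) (h : ∀ o ≠ o₀, Nat.card o.orbit = b) :
    Nat.card {o : orbitRel.Quotient G X // Nat.card o.orbit = b} =
      Nat.card (orbitRel.Quotient G X) - 1 := by
  classical
  have := Fintype.ofFinite (orbitRel.Quotient G X)
  have hiff : ∀ o : orbitRel.Quotient G X, Nat.card o.orbit = b ↔ o ≠ o₀ :=
    fun o => ⟨fun hb ho => hab (by rw [← h₀, ← hb, ho]), h o⟩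
  rw [Nat.card_congr (Equiv.subtypeEquivRight hiff), Nat.card_eq_fintype_card,
    Fintype.card_subtype_compl, Fintype.card_subtype_eq, Nat.card_eq_fintype_card]

end OrbitCount

theorem card_subtype_ne_zero_and_ne_neg_one (K : Type*) [Field K] [Fintype K] :
    Nat.card {x : K // x ≠ 0 ∧ x ≠ -1} = Fintype.card K - 2 := by
  classical
  have hfilter : Finset.univ.filter (fun x : K => x ≠ 0 ∧ x ≠ -1) = Finset.univ \ {0, -1} := by
    ext; simp
  rw [Nat.card_eq_fintype_card, Fintype.card_subtype, hfilter,
    Finset.card_sdiff_of_subset (Finset.subset_univ _), Finset.card_univ,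
    Finset.card_pair (neg_ne_zero.2 one_ne_zero).symm]

theorem ZMod.sq_add_add_one_ne_zero {p : ℕ} [Fact p.Prime] (hp : p % 3 = 2) (x : ZMod p) :
    x ^ 2 + x + 1 ≠ 0 := by
  intro h
  have hx0 : x ≠ 0 := by rintro rfl; simp at h
  have hx1 : x ≠ 1 := by
    rintro rfl
    have h3 : ((3 : ℕ) : ZMod p) = 0 := by push_cast; linear_combination h
    have := (Nat.prime_dvd_prime_iff_eq Fact.out Nat.prime_three).1
      ((ZMod.natCast_eq_zero_iff 3 p).1 h3)
    omega
  have h3 : orderOf x = 3 := orderOf_eq_prime (by linear_combination (x - 1) * h) hx1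
  have := h3 ▸ ZMod.orderOf_dvd_card_sub_one hx0
  omega

section Field
variable {K : Type*} [Field K] {f g : Perm {x : K // x ≠ 0 ∧ x ≠ -1}}

lemma mul_self_eq_one_of_apply_eq_neg_one_sub (hf : ∀ s, (f s : K) = -1 - s) : f * f = 1 :=
  Equiv.ext fun s => Subtype.ext <| by rw [Perm.mul_apply, hf, hf, Perm.one_apply]; ring

lemma mul_self_eq_one_of_apply_eq_inv (hg : ∀ s, (g s : K) = (s : K)⁻¹) : g * g = 1 :=
  Equiv.ext fun s => Subtype.ext <| by rw [Perm.mul_apply, hg, hg, inv_inv, Perm.one_apply]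

lemma braid_of_apply_eq_neg_one_sub_of_apply_eq_inv (hf : ∀ s, (f s : K) = -1 - s)
    (hg : ∀ s, (g s : K) = (s : K)⁻¹) : f * g * f = g * f * g := by
  refine Equiv.ext fun s => Subtype.ext ?_
  have h0 : (s : K) ≠ 0 := s.2.1
  have h1 : -1 - (s : K) ≠ 0 := fun h => s.2.2 (by linear_combination -h)
  simp only [Perm.mul_apply, hf, hg]
  refine eq_inv_of_mul_eq_one_left ?_
  field_simp
  ring

lemma val_eq_neg_inv_two_of_apply_eq_self (hf : ∀ s, (f s : K) = -1 - s) (h2 : (2 : K) ≠ 0)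
    {s : {x : K // x ≠ 0 ∧ x ≠ -1}} (h : f s = s) : (s : K) = -2⁻¹ := by
  have := congrArg Subtype.val h
  rw [hf] at this
  field_simp
  linear_combination -this

lemma val_eq_one_of_apply_eq_self (hg : ∀ s, (g s : K) = (s : K)⁻¹)
    {s : {x : K // x ≠ 0 ∧ x ≠ -1}} (h : g s = s) : (s : K) = 1 := by
  have := congrArg Subtype.val h
  rw [hg] at this
  have hss : (s : K) * s = 1 := by nth_rw 2 [← this]; exact mul_inv_cancel₀ s.2.1
  exact (mul_self_eq_one_iff.1 hss).resolve_right s.2.2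

lemma sq_add_add_one_eq_zero_of_apply_eq_self (hf : ∀ s, (f s : K) = -1 - s)
    (hg : ∀ s, (g s : K) = (s : K)⁻¹) {s : {x : K // x ≠ 0 ∧ x ≠ -1}} (h : f (g s) = s) :
    (s : K) ^ 2 + s + 1 = 0 := by
  have h0 : (s : K) ≠ 0 := s.2.1
  have := congrArg Subtype.val h
  rw [hf, hg] at this
  field_simp at this
  linear_combination -this

lemma val_eq_neg_two_of_apply_eq_self (hf : ∀ s, (f s : K) = -1 - s)
    (hg : ∀ s, (g s : K) = (s : K)⁻¹) {s : {x : K // x ≠ 0 ∧ x ≠ -1}} (h : f (g (f s)) = s) :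
    (s : K) = -2 := by
  have h0 : (s : K) ≠ 0 := s.2.1
  have h1 : -1 - (s : K) ≠ 0 := fun h => s.2.2 (by linear_combination -h)
  have := congrArg Subtype.val h
  rw [hf, hg, hf] at this
  field_simp at this
  have : (s : K) * (s + 2) = 0 := by linear_combination this
  exact eq_neg_of_add_eq_zero_left ((mul_eq_zero.1 this).resolve_left h0)

lemma card_closure_eq_six (hf : ∀ s, (f s : K) = -1 - s)
    (hg : ∀ s, (g s : K) = (s : K)⁻¹) (h2 : (2 : K) ≠ 0) (hK : ∀ x : K, x ^ 2 + x + 1 ≠ 0) :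
    Nat.card (closure {f, g}) = 6 := by
  let s₁ : {x : K // x ≠ 0 ∧ x ≠ -1} := ⟨1, one_ne_zero, fun h => h2 (by linear_combination h)⟩
  refine card_closure_pair_of_braid (mul_self_eq_one_of_apply_eq_neg_one_sub hf)
    (mul_self_eq_one_of_apply_eq_inv hg) (braid_of_apply_eq_neg_one_sub_of_apply_eq_inv hf hg)
    (fun h => hK 1 ?_) (fun h => hK 1 ?_)
  · have : (-1 - 1 : K) = 1 :=
      (hf s₁).symm.trans (congrArg Subtype.val (DFunLike.congr_fun h s₁))
    linear_combination -this
  · exact sq_add_add_one_eq_zero_of_apply_eq_self hf hg (DFunLike.congr_fun h s₁)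

lemma orbit_closure_eq_of_val_eq_one (hf : ∀ s, (f s : K) = -1 - s)
    (hg : ∀ s, (g s : K) = (s : K)⁻¹) {s : {x : K // x ≠ 0 ∧ x ≠ -1}} (hs : (s : K) = 1) :
    orbit (closure {f, g}) s = {s, f s, g (f s)} := by
  have hgs : g s = s := Subtype.ext (by rw [hg, hs, inv_one])
  have hbraid := braid_of_apply_eq_neg_one_sub_of_apply_eq_inv hf hg
  have hfgf : f (g (f s)) = g (f s) := by
    rw [← Perm.mul_apply, ← Perm.mul_apply, hbraid, Perm.mul_apply, Perm.mul_apply, hgs]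
  rw [orbit_closure_pair_of_braid (mul_self_eq_one_of_apply_eq_neg_one_sub hf)
    (mul_self_eq_one_of_apply_eq_inv hg) hbraid]
  simp only [Perm.smul_def, Perm.mul_apply, hgs, hfgf]
  ext x
  simp only [Set.mem_insert_iff, Set.mem_singleton_iff]
  tauto

lemma orbit_closure_eq_setOf_of_val_eq_one (hf : ∀ s, (f s : K) = -1 - s)
    (hg : ∀ s, (g s : K) = (s : K)⁻¹) {s : {x : K // x ≠ 0 ∧ x ≠ -1}} (hs : (s : K) = 1) :
    orbit (closure {f, g}) s =
      {x : {x : K // x ≠ 0 ∧ x ≠ -1} | (x : K) = 1 ∨ (x : K) = -2⁻¹ ∨ (x : K) = -2} := by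
  rw [orbit_closure_eq_of_val_eq_one hf hg hs]
  ext x
  simp only [Set.mem_insert_iff, Set.mem_singleton_iff, Set.mem_ofPred_eq, Subtype.ext_iff, hg, hf,
    hs]
  norm_num
  tauto

lemma card_orbit_closure_of_val_eq_one (hf : ∀ s, (f s : K) = -1 - s)
    (hg : ∀ s, (g s : K) = (s : K)⁻¹) (h3 : (3 : K) ≠ 0) {s : {x : K // x ≠ 0 ∧ x ≠ -1}}
    (hs : (s : K) = 1) : Nat.card (orbit (closure {f, g}) s) = 3 := by
  have hfs : f s ≠ s := fun h => h3 <| by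
    have := congrArg Subtype.val h
    rw [hf, hs] at this
    linear_combination -this
  have hgs : g s = s := Subtype.ext (by rw [hg, hs, inv_one])
  have hgg : ∀ y, g (g y) = y := fun y => by
    rw [← Perm.mul_apply, mul_self_eq_one_of_apply_eq_inv hg, Perm.one_apply]
  rw [orbit_closure_eq_of_val_eq_one hf hg hs, Nat.card_coe_set_eq, Set.ncard_eq_three]
  refine ⟨s, f s, g (f s), hfs.symm, fun h => hfs ?_, fun h => hfs ?_, rfl⟩
  · rw [← hgg (f s), ← h, hgs]
  · exact Subtype.ext ((val_eq_one_of_apply_eq_self hg h.symm).trans hs.symm)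

lemma card_orbit_closure_of_notMem_orbit_one (hf : ∀ s, (f s : K) = -1 - s)
    (hg : ∀ s, (g s : K) = (s : K)⁻¹) (h2 : (2 : K) ≠ 0) (hK : ∀ x : K, x ^ 2 + x + 1 ≠ 0)
    {s t : {x : K // x ≠ 0 ∧ x ≠ -1}} (hs : (s : K) = 1) (ht : t ∉ orbit (closure {f, g}) s) :
    Nat.card (orbit (closure {f, g}) t) = 6 := by
  rw [orbit_closure_eq_setOf_of_val_eq_one hf hg hs] at ht
  simp only [Set.mem_ofPred_eq, not_or] at ht
  obtain ⟨ht₁, ht₂, ht₃⟩ := ht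
  rw [← card_closure_eq_six hf hg h2 hK]
  exact card_orbit_closure_pair_of_braid (mul_self_eq_one_of_apply_eq_neg_one_sub hf)
    (mul_self_eq_one_of_apply_eq_inv hg) (braid_of_apply_eq_neg_one_sub_of_apply_eq_inv hf hg)
    (fun h => ht₂ (val_eq_neg_inv_two_of_apply_eq_self hf h2 h))
    (fun h => ht₁ (val_eq_one_of_apply_eq_self hg h))
    (fun h => hK _ (sq_add_add_one_eq_zero_of_apply_eq_self hf hg h))
    (fun h => ht₃ (val_eq_neg_two_of_apply_eq_self hf hg h))

end Field

theorem orbit_count_two_mod_three (p : ℕ) [Fact p.Prime] (hp11 : 11 ≤ p)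
    (h3 : p % 3 = 2)
    (f g : Equiv.Perm {x : ZMod p // x ≠ 0 ∧ x ≠ -1})
    (hf : ∀ s, ((f s : ZMod p)) = -1 - (s : ZMod p))
    (hg : ∀ s, ((g s : ZMod p)) = (s : ZMod p)⁻¹)
    (H : Subgroup (Equiv.Perm {x : ZMod p // x ≠ 0 ∧ x ≠ -1}))
    (hH : H = Subgroup.closure {f, g}) :
    Nat.card (MulAction.orbitRel.Quotient H {x : ZMod p // x ≠ 0 ∧ x ≠ -1}) = (p + 1) / 6 ∧
    (∀ s : {x : ZMod p // x ≠ 0 ∧ x ≠ -1}, (s : ZMod p) = 1 →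
      MulAction.orbit H s =
        {x : {x : ZMod p // x ≠ 0 ∧ x ≠ -1} |
          (x : ZMod p) = 1 ∨ (x : ZMod p) = -2⁻¹ ∨ (x : ZMod p) = -2} ∧
      Nat.card (MulAction.orbit H s) = 3) ∧
    Nat.card {o : MulAction.orbitRel.Quotient H {x : ZMod p // x ≠ 0 ∧ x ≠ -1} //
      Nat.card o.orbit = 6} = (p - 5) / 6 := by
  subst hH
  have h2 : (2 : ZMod p) ≠ 0 := by
    have : ¬ p ∣ 2 := fun h => absurd (Nat.le_of_dvd two_pos h) (by omega)
    exact_mod_cast (ZMod.natCast_eq_zero_iff 2 p).not.2 this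
  have hK := ZMod.sq_add_add_one_ne_zero h3
  have h3' : (3 : ZMod p) ≠ 0 := fun h => hK 1 (by linear_combination h)
  let s₁ : {x : ZMod p // x ≠ 0 ∧ x ≠ -1} :=
    ⟨1, one_ne_zero, fun h => h2 (by linear_combination h)⟩
  let o₁ : orbitRel.Quotient (closure {f, g}) {x : ZMod p // x ≠ 0 ∧ x ≠ -1} := Quotient.mk'' s₁
  have hcard₁ : Nat.card o₁.orbit = 3 := card_orbit_closure_of_val_eq_one hf hg h3' rfl
  have hcard : ∀ o ≠ o₁, Nat.card o.orbit = 6 := by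
    intro o ho
    induction o using Quotient.inductionOn' with | h t => ?_
    exact card_orbit_closure_of_notMem_orbit_one hf hg h2 hK rfl fun h => ho (Quotient.sound h)
  have hcount := card_eq_add_mul_card_orbitRel_quotient_sub_one hcard₁ hcard
  rw [card_subtype_ne_zero_and_ne_neg_one, ZMod.card] at hcount
  have hpos : 0 < Nat.card (orbitRel.Quotient (closure {f, g}) {x : ZMod p // x ≠ 0 ∧ x ≠ -1}) :=
    Nat.card_pos_iff.2 ⟨⟨o₁⟩, inferInstance⟩
  refine ⟨by omega, fun s hs => ⟨orbit_closure_eq_setOf_of_val_eq_one hf hg hs,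
    card_orbit_closure_of_val_eq_one hf hg h3' hs⟩, ?_⟩
  rw [card_subtype_card_orbit_eq_card_orbitRel_quotient_sub_one hcard₁ (by norm_num) hcard]
  omega
end

section
/- For a prime p, (s^p - (s+1)^p + 1)/p ≡ f(s+1) (mod p) for 1 ≤ s ≤ p-2, where f(u) = Σ_{j=1}^{p-1} u^j · j^{-1} in Z/pZ. -/
/-- `f(u) = ∑_{j=1}^{p-1} u^j / j` computed in `ZMod p`. -/
def fsum (p : ℕ) (u : ZMod p) : ZMod p :=
  ∑ j ∈ Finset.Icc 1 (p - 1), u ^ j * (j : ZMod p)⁻¹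

/-!
Write `s ^ p = ((s + 1) - 1) ^ p` and expand binomially. Since `p` is odd, the terms `k = 0` and
`k = p` cancel against `-(s + 1) ^ p + 1`, and every remaining coefficient `C(p, k)` is divisible
by `p`. Modulo `p`, `C(p, k) / p ≡ (-1) ^ (k - 1) / k` because `k * C(p, k) = p * C(p - 1, k - 1)`
and `C(p - 1, j) ≡ (-1) ^ j` by Pascal's rule; the signs then combine to `(-1) ^ (p - 1) = 1`.
-/

open Finset

theorem Nat.Prime.cast_choose_pred {p k : ℕ} (hp : p.Prime) (hk : k < p) :
    ((p - 1).choose k : ZMod p) = (-1) ^ k := by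
  induction k with
  | zero => simp
  | succ k ih =>
    have hpascal : p.choose (k + 1) = (p - 1).choose k + (p - 1).choose (k + 1) := by
      rw [← Nat.choose_succ_succ', Nat.sub_add_cancel hp.one_le]
    have hvanish : (p.choose (k + 1) : ZMod p) = 0 :=
      (ZMod.natCast_eq_zero_iff _ _).2 (hp.dvd_choose_self k.succ_ne_zero hk)
    rw [hpascal, Nat.cast_add, ih (by omega)] at hvanish
    rw [pow_succ]
    linear_combination hvanish

theorem Nat.Prime.cast_choose_div_self {p k : ℕ} (hp : p.Prime) (hk : k ≠ 0) (hkp : k < p) :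
    ((p.choose k / p : ℕ) : ZMod p) = (-1) ^ (k - 1) * (k : ZMod p)⁻¹ := by
  have := Fact.mk hp
  have hk' : (k : ZMod p) ≠ 0 := by
    rw [Ne, ZMod.natCast_eq_zero_iff]
    exact fun h => hk (Nat.eq_zero_of_dvd_of_lt h hkp)
  have hmul_self : p.choose k / p * k = (p - 1).choose (k - 1) := by
    have h := Nat.add_one_mul_choose_eq (p - 1) (k - 1)
    rw [Nat.sub_add_cancel hp.one_le, Nat.sub_add_cancel (Nat.one_le_iff_ne_zero.2 hk)] at h
    rw [Nat.div_mul_right_comm (hp.dvd_choose_self hk hkp), ← h, Nat.mul_div_cancel_left _ hp.pos]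
  rw [eq_mul_inv_iff_mul_eq₀ hk', ← Nat.cast_mul, hmul_self, hp.cast_choose_pred (by omega)]

theorem pow_sub_add_one_pow_add_one {R : Type*} [CommRing R] {p : ℕ} (hp : p.Prime)
    (hodd : Odd p) (x : R) : x ^ p - (x + 1) ^ p + 1 =
      p * ∑ k ∈ Icc 1 (p - 1), (-1) ^ (p - k) * (p.choose k / p : ℕ) * (x + 1) ^ k := by
  have hbinom : x ^ p = ∑ k ∈ range (p + 1), (-1) ^ (p - k) * p.choose k * (x + 1) ^ k := by
    rw [show x = (x + 1) + -1 by ring, add_pow, add_neg_cancel_right]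
    exact sum_congr rfl fun k _ => by ring
  have hinner : ∑ k ∈ Icc 1 (p - 1), (-1) ^ (p - k) * (p.choose k : R) * (x + 1) ^ k =
      p * ∑ k ∈ Icc 1 (p - 1), (-1) ^ (p - k) * (p.choose k / p : ℕ) * (x + 1) ^ k := by
    rw [mul_sum]
    refine sum_congr rfl fun k hk => ?_
    obtain ⟨hk1, hkp⟩ := mem_Icc.1 hk
    obtain ⟨m, hm⟩ := hp.dvd_choose_self (k := k) (by omega) (by omega)
    rw [hm, Nat.mul_div_cancel_left _ hp.pos, Nat.cast_mul]
    ring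
  have hIcc : Icc 1 (p - 1) = Ico 1 p :=
    Icc_sub_one_right_eq_Ico_of_not_isMin (by simpa using hp.ne_zero) 1
  rw [← hinner, hbinom, range_eq_Ico, sum_Ico_succ_top (Nat.zero_le p),
    sum_eq_sum_Ico_succ_bot hp.pos, hIcc]
  simp [hodd.neg_one_pow]

theorem cast_pow_sub_add_one_pow_add_one_div {p : ℕ} (hp : p.Prime) (hodd : Odd p) (x : ℤ) :
    (((x ^ p - (x + 1) ^ p + 1) / p : ℤ) : ZMod p) = fsum p ((x : ZMod p) + 1) := by
  have := Fact.mk hp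
  rw [pow_sub_add_one_pow_add_one hp hodd,
    Int.mul_ediv_cancel_left _ (by exact_mod_cast hp.ne_zero), fsum]
  simp only [Int.cast_mul, Int.cast_sum, Int.cast_pow, Int.cast_neg, Int.cast_one, Int.cast_add,
    Int.cast_natCast]
  refine sum_congr rfl fun k hk => ?_
  obtain ⟨hk1, hkp⟩ := mem_Icc.1 hk
  rw [hp.cast_choose_div_self (by omega) (by omega)]
  have hsign : (-1 : ZMod p) ^ (p - k) * (-1) ^ (k - 1) = 1 := by
    rw [← pow_add, show p - k + (k - 1) = p - 1 by omega, ZMod.pow_card_sub_one_eq_one (by simp)]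
  linear_combination ((x : ZMod p) + 1) ^ k * (k : ZMod p)⁻¹ * hsign

theorem heathBrown_identity (p : ℕ) (hp : p.Prime) (s : ℕ)
    (h1 : 1 ≤ s) (h2 : s ≤ p - 2) :
    ((((s : ℤ) ^ p - ((s : ℤ) + 1) ^ p + 1) / (p : ℤ) : ℤ) : ZMod p) =
      fsum p ((s : ZMod p) + 1) := by
  have hodd : Odd p := hp.odd_of_ne_two (by omega)
  exact_mod_cast cast_pow_sub_add_one_pow_add_one_div hp hodd s
end
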